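/- arXiv:2205.07376 — 4 statements merged into one kernel-verified Lean document; each statement's English description precedes it below -/
import Mathlib

section
/- Let g₀ > 0. For all a ∈ (0,1], g ∈ (0, g₀], and d ∈ {2,3,4}, the integral z = ∫_{|X| ≤ (π/g) a^{(d-4)/2}} exp(-2 a^{d-4} g^{-2} (1 - cos(g a^{(4-d)/2} X))) dX satisfies z̃_ℓ ≤ z ≤ z_u where z̃_ℓ = ∫_{|X| ≤ π/g₀} e^{-X²} dX > 0 and z_u = ∫_ℝ exp(-(4/π²) X²) dX = π^{3/2}/2. -/
open Real MeasureTheory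

/-! With the effective coupling `c = g a^{(4-d)/2}`, which lies in `(0, g₀]` because `d ≤ 4` and
`a ≤ 1`, the integral becomes `∫_{|x| ≤ π/c} exp (-(2/c²) (1 - cos (c x))) dx`. The bound
`1 - cos u ≤ u²/2` puts the exponent above `-x²`, and on `|c x| ≤ π` the bound
`1 - cos u ≥ 2u²/π²` puts it below `-(4/π²) x²`. Since `π/g₀ ≤ π/c`, the lower Gaussian integral
runs over a smaller interval, and the upper one is a full Gaussian integral. -/

noncomputable def bondWeight (c x : ℝ) : ℝ :=
  exp (-(2 / c ^ 2) * (1 - cos (c * x)))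

theorem continuous_bondWeight (c : ℝ) : Continuous (bondWeight c) := by
  unfold bondWeight
  fun_prop

theorem exp_neg_sq_le_bondWeight {c : ℝ} (hc : c ≠ 0) (x : ℝ) :
    exp (-x ^ 2) ≤ bondWeight c x := by
  refine exp_le_exp.mpr ?_
  have hcos := one_sub_sq_div_two_le_cos (x := c * x)
  have hmono : 2 / c ^ 2 * (1 - cos (c * x)) ≤ 2 / c ^ 2 * ((c * x) ^ 2 / 2) := by
    gcongr
    linarith
  have hsimp : 2 / c ^ 2 * ((c * x) ^ 2 / 2) = x ^ 2 := by field_simp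
  linarith

theorem bondWeight_le_exp_neg_mul_sq {c x : ℝ} (hc : 0 < c) (hx : |x| ≤ π / c) :
    bondWeight c x ≤ exp (-(4 / π ^ 2) * x ^ 2) := by
  refine exp_le_exp.mpr ?_
  have hcx : |c * x| ≤ π := by
    rw [abs_mul, abs_of_pos hc]
    exact (le_div_iff₀' hc).mp hx
  have hcos := cos_le_one_sub_mul_cos_sq hcx
  have hmono : 2 / c ^ 2 * (2 / π ^ 2 * (c * x) ^ 2) ≤ 2 / c ^ 2 * (1 - cos (c * x)) := by
    gcongr
    linarith
  have hsimp : 2 / c ^ 2 * (2 / π ^ 2 * (c * x) ^ 2) = 4 / π ^ 2 * x ^ 2 := by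
    field_simp
    ring
  linarith

theorem integral_exp_neg_sq_Icc_pos {L : ℝ} (hL : 0 < L) :
    0 < ∫ x in Set.Icc (-L) L, exp (-x ^ 2) := by
  rw [integral_Icc_eq_integral_Ioc, ← intervalIntegral.integral_of_le (by linarith)]
  exact intervalIntegral.intervalIntegral_pos_of_pos
    (Continuous.intervalIntegrable (by fun_prop) _ _) (fun x => exp_pos _) (by linarith)

theorem integral_exp_neg_sq_le_integral_bondWeight {c L : ℝ} (hc : 0 < c) (hL : L ≤ π / c) :
    ∫ x in Set.Icc (-L) L, exp (-x ^ 2) ≤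
      ∫ x in Set.Icc (-(π / c)) (π / c), bondWeight c x :=
  calc ∫ x in Set.Icc (-L) L, exp (-x ^ 2)
      ≤ ∫ x in Set.Icc (-L) L, bondWeight c x :=
        setIntegral_mono_on (Continuous.integrableOn_Icc (by fun_prop))
          (continuous_bondWeight c).integrableOn_Icc measurableSet_Icc
          fun x _ => exp_neg_sq_le_bondWeight hc.ne' x
    _ ≤ ∫ x in Set.Icc (-(π / c)) (π / c), bondWeight c x :=
        setIntegral_mono_set (continuous_bondWeight c).integrableOn_Icc
          (Filter.Eventually.of_forall fun _ => (exp_pos _).le)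
          (Filter.Eventually.of_forall (Set.Icc_subset_Icc (neg_le_neg hL) hL))

theorem integral_bondWeight_le_integral_gaussian {c : ℝ} (hc : 0 < c) :
    ∫ x in Set.Icc (-(π / c)) (π / c), bondWeight c x ≤ ∫ x, exp (-(4 / π ^ 2) * x ^ 2) := by
  have hgauss : Integrable fun x : ℝ => exp (-(4 / π ^ 2) * x ^ 2) :=
    integrable_exp_neg_mul_sq (by positivity)
  calc ∫ x in Set.Icc (-(π / c)) (π / c), bondWeight c x
      ≤ ∫ x in Set.Icc (-(π / c)) (π / c), exp (-(4 / π ^ 2) * x ^ 2) :=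
        setIntegral_mono_on (continuous_bondWeight c).integrableOn_Icc hgauss.integrableOn
          measurableSet_Icc fun _ hx => bondWeight_le_exp_neg_mul_sq hc (abs_le.mpr hx)
    _ ≤ ∫ x, exp (-(4 / π ^ 2) * x ^ 2) :=
        setIntegral_le_integral hgauss (Filter.Eventually.of_forall fun _ => (exp_pos _).le)

theorem integral_exp_neg_four_div_pi_sq_mul_sq :
    ∫ x : ℝ, exp (-(4 / π ^ 2) * x ^ 2) = π ^ ((3 : ℝ) / 2) / 2 := by
  have hcube : (π ^ ((3 : ℝ) / 2)) ^ 2 = π ^ 3 := by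
    rw [← rpow_natCast, ← rpow_mul pi_pos.le]
    norm_num
  have hsq : π / (4 / π ^ 2) = (π ^ ((3 : ℝ) / 2) / 2) ^ 2 := by
    rw [div_pow, hcube]
    field_simp
    ring
  rw [integral_gaussian, hsq, sqrt_sq (by positivity)]

theorem div_mul_rpow_neg {a : ℝ} (ha : 0 < a) (x g s : ℝ) :
    x / g * a ^ (-s) = x / (g * a ^ s) := by
  rw [rpow_neg ha.le]
  ring

theorem mul_rpow_neg_two_mul_div_sq {a : ℝ} (ha : 0 < a) (k g s : ℝ) :
    k * a ^ (-(2 * s)) / g ^ 2 = k / (g * a ^ s) ^ 2 := by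
  rw [rpow_neg ha.le, mul_comm 2 s, rpow_mul ha.le, rpow_two]
  field_simp

theorem single_bond_partition_function_bounds_general
    (g₀ a g : ℝ) (d : ℕ) (ha : a ∈ Set.Ioc (0 : ℝ) 1)
    (hg : g ∈ Set.Ioc (0 : ℝ) g₀) (hd : d ∈ ({2, 3, 4} : Set ℕ)) :
    (0 < ∫ x in Set.Icc (-(π / g₀)) (π / g₀), Real.exp (-x ^ 2)) ∧
    (∫ x in Set.Icc (-(π / g₀)) (π / g₀), Real.exp (-x ^ 2)) ≤
      (∫ x in Set.Icc (-(π / g * a ^ (((d : ℝ) - 4) / 2))) (π / g * a ^ (((d : ℝ) - 4) / 2)),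
        Real.exp (-(2 * a ^ ((d : ℝ) - 4) / g ^ 2) *
          (1 - Real.cos (g * a ^ ((4 - (d : ℝ)) / 2) * x)))) ∧
    (∫ x in Set.Icc (-(π / g * a ^ (((d : ℝ) - 4) / 2))) (π / g * a ^ (((d : ℝ) - 4) / 2)),
        Real.exp (-(2 * a ^ ((d : ℝ) - 4) / g ^ 2) *
          (1 - Real.cos (g * a ^ ((4 - (d : ℝ)) / 2) * x)))) ≤
      (∫ x : ℝ, Real.exp (-(4 / π ^ 2) * x ^ 2)) ∧
    (∫ x : ℝ, Real.exp (-(4 / π ^ 2) * x ^ 2)) = π ^ ((3 : ℝ) / 2) / 2 := by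
  obtain ⟨ha0, ha1⟩ := ha
  obtain ⟨hg0, hgg₀⟩ := hg
  set s := (4 - (d : ℝ)) / 2 with hs_def
  have hs : 0 ≤ s := by
    simp only [Set.mem_insert_iff, Set.mem_singleton_iff] at hd
    rcases hd with rfl | rfl | rfl <;> norm_num [hs_def]
  have hc0 : 0 < g * a ^ s := mul_pos hg0 (rpow_pos_of_pos ha0 s)
  have hcg₀ : g * a ^ s ≤ g₀ :=
    (mul_le_of_le_one_right hg0.le (rpow_le_one ha0.le ha1 hs)).trans hgg₀
  rw [show ((d : ℝ) - 4) / 2 = -s by rw [hs_def]; ring, show (d : ℝ) - 4 = -(2 * s) by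
    rw [hs_def]; ring, div_mul_rpow_neg ha0, mul_rpow_neg_two_mul_div_sq ha0]
  exact ⟨integral_exp_neg_sq_Icc_pos (div_pos pi_pos (hg0.trans_le hgg₀)),
    integral_exp_neg_sq_le_integral_bondWeight hc0 (div_le_div_of_nonneg_left pi_pos.le hc0 hcg₀),
    integral_bondWeight_le_integral_gaussian hc0, integral_exp_neg_four_div_pi_sq_mul_sq⟩

theorem single_bond_partition_function_bounds
    (g₀ a g : ℝ) (d : ℕ) (hg₀ : 0 < g₀) (ha : a ∈ Set.Ioc (0 : ℝ) 1)
    (hg : g ∈ Set.Ioc (0 : ℝ) g₀) (hd : d ∈ ({2, 3, 4} : Set ℕ)) :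
    (0 < ∫ x in Set.Icc (-(π / g₀)) (π / g₀), Real.exp (-x ^ 2)) ∧
    (∫ x in Set.Icc (-(π / g₀)) (π / g₀), Real.exp (-x ^ 2)) ≤
      (∫ x in Set.Icc (-(π / g * a ^ (((d : ℝ) - 4) / 2))) (π / g * a ^ (((d : ℝ) - 4) / 2)),
        Real.exp (-(2 * a ^ ((d : ℝ) - 4) / g ^ 2) *
          (1 - Real.cos (g * a ^ ((4 - (d : ℝ)) / 2) * x)))) ∧
    (∫ x in Set.Icc (-(π / g * a ^ (((d : ℝ) - 4) / 2))) (π / g * a ^ (((d : ℝ) - 4) / 2)),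
        Real.exp (-(2 * a ^ ((d : ℝ) - 4) / g ^ 2) *
          (1 - Real.cos (g * a ^ ((4 - (d : ℝ)) / 2) * x)))) ≤
      (∫ x : ℝ, Real.exp (-(4 / π ^ 2) * x ^ 2)) ∧
    (∫ x : ℝ, Real.exp (-(4 / π ^ 2) * x ^ 2)) = π ^ ((3 : ℝ) / 2) / 2 :=
  single_bond_partition_function_bounds_general g₀ a g d ha hg hd
end

section
/- For N ≥ 1 and β = 2, the function I₂(u) = ∫_{(-u,u)^N} exp(-Σⱼ yⱼ²) Π_{j<k}(yⱼ - y_k)² d^N y is monotone increasing in u > 0, and I₂(u) ≤ I₂(∞) = (2π)^{N/2} 2^{-N²/2} Π_{j=1}^{N} j!. -/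
/-!
The Vandermonde determinant equals `det [p_j (y_i)]` for any monic polynomials `p_j` of degree
`j`; take the monic Hermite polynomials orthogonal for `e^{-x²}`. Andréief's identity turns the
`N`-fold integral of `e^{-Σ y_j²} Π (y_j - y_k)²` into `N!` times the Gram determinant of the
`p_j`, which is diagonal with entries `j! √π / 2^j`. Since the integrand is nonnegative and
integrable, its integrals over the boxes `(-u, u)^N` increase with `u` and are bounded by the full
integral.
-/

open Real MeasureTheory Finset

noncomputable def GUEIntegral (N : ℕ) (u : ℝ) : ℝ :=
  ∫ y in Set.univ.pi (fun _ : Fin N => Set.Ioo (-u) u),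
    Real.exp (-∑ j, y j ^ 2) *
      ∏ p ∈ Finset.univ.filter (fun p : Fin N × Fin N => p.1 < p.2), (y p.1 - y p.2) ^ 2

open Equiv Matrix Polynomial

theorem Matrix.sum_perm_sum_perm_sign_mul_prod {ι R : Type*} [Fintype ι] [DecidableEq ι]
    [CommRing R] (M : Matrix ι ι R) :
    ∑ σ : Perm ι, ∑ τ : Perm ι, (Perm.sign σ : R) * Perm.sign τ * ∏ i, M (σ i) (τ i) =
      (Fintype.card ι).factorial * M.det := by
  -- the inner sum is the determinant of `M` with its rows permuted by `σ`
  have hrow (σ : Perm ι) :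
      ∑ τ : Perm ι, (Perm.sign σ : R) * Perm.sign τ * ∏ i, M (σ i) (τ i) = M.det := by
    have h := det_permute σ M
    rw [← det_transpose, det_apply'] at h
    simp_rw [mul_assoc, ← mul_sum]
    simp only [transpose_apply, submatrix_apply, id] at h
    rw [h, ← mul_assoc, ← Int.cast_mul, ← Units.val_mul, Int.units_mul_self]
    simp
  rw [sum_congr rfl fun σ _ => hrow σ, sum_const, card_univ, Fintype.card_perm, nsmul_eq_mul]

theorem Matrix.det_of_apply_apply {ι α R : Type*} [Fintype ι] [DecidableEq ι] [CommRing R]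
    (f : ι → α → R) (x : ι → α) :
    (of fun i j => f j (x i)).det =
      ∑ σ : Perm ι, (Perm.sign σ : R) * ∏ i, f (σ i) (x i) := by
  rw [← det_transpose, det_apply']
  rfl

theorem Matrix.det_of_apply_apply_mul_det_of_apply_apply {ι α R : Type*} [Fintype ι]
    [DecidableEq ι] [CommRing R] (f g : ι → α → R) (x : ι → α) :
    (of fun i j => f j (x i)).det * (of fun i j => g j (x i)).det =
      ∑ σ : Perm ι, ∑ τ : Perm ι, (Perm.sign σ : R) * Perm.sign τ *
        ∏ i, f (σ i) (x i) * g (τ i) (x i) := by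
  simp_rw [Matrix.det_of_apply_apply, sum_mul_sum, prod_mul_distrib]
  refine sum_congr rfl fun σ _ => sum_congr rfl fun τ _ => by ring

theorem Finset.prod_filter_fst_lt_snd {ι M : Type*} [Fintype ι] [LinearOrder ι]
    [LocallyFiniteOrderTop ι] [CommMonoid M] (f : ι → ι → M) :
    ∏ p ∈ univ.filter (fun p : ι × ι => p.1 < p.2), f p.1 p.2 =
      ∏ i, ∏ j ∈ Ioi i, f i j := by
  rw [prod_filter, Fintype.prod_prod_type]
  refine prod_congr rfl fun i _ => ?_
  rw [← prod_filter, filter_lt_eq_Ioi]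

theorem Matrix.det_vandermonde_sq {R : Type*} [CommRing R] {n : ℕ} (x : Fin n → R) :
    (vandermonde x).det ^ 2 =
      ∏ p ∈ univ.filter (fun p : Fin n × Fin n => p.1 < p.2), (x p.1 - x p.2) ^ 2 := by
  rw [det_vandermonde, prod_filter_fst_lt_snd (fun i j => (x i - x j) ^ 2), ← prod_pow]
  refine prod_congr rfl fun i _ => ?_
  rw [← prod_pow]
  exact prod_congr rfl fun j _ => by ring

theorem Polynomial.Monic.iterate_derivative_natDegree {R : Type*} [CommSemiring R] {p : R[X]}
    (hp : p.Monic) : derivative^[p.natDegree] p = C (p.natDegree.factorial : R) := by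
  rw [eq_C_of_natDegree_le_zero ((natDegree_iterate_derivative p _).trans (Nat.sub_self _).le),
    coeff_iterate_derivative, zero_add, Nat.descFactorial_self, hp.coeff_natDegree, nsmul_one]

section Andreief

variable {α 𝕜 ι : Type*} [MeasurableSpace α] [RCLike 𝕜] [Fintype ι] [DecidableEq ι]
  {μ : Measure α} [SigmaFinite μ] {f g : ι → α → 𝕜}

theorem integrable_sign_mul_sign_mul_prod
    (hfg : ∀ a b, Integrable (fun t => f a t * g b t) μ) (σ τ : Perm ι) :
    Integrable (fun x : ι → α => (Perm.sign σ : 𝕜) * Perm.sign τ *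
      ∏ i, f (σ i) (x i) * g (τ i) (x i)) (Measure.pi fun _ => μ) :=
  (Integrable.fintype_prod fun i => hfg (σ i) (τ i)).const_mul _

theorem integrable_det_mul_det (hfg : ∀ a b, Integrable (fun t => f a t * g b t) μ) :
    Integrable (fun x : ι → α => (of fun i j => f j (x i)).det * (of fun i j => g j (x i)).det)
      (Measure.pi fun _ => μ) := by
  simp_rw [det_of_apply_apply_mul_det_of_apply_apply]
  exact integrable_finsetSum _ fun σ _ => integrable_finsetSum _ fun τ _ =>
    integrable_sign_mul_sign_mul_prod hfg σ τ

/-- Andréief's identity. -/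
theorem integral_det_mul_det (hfg : ∀ a b, Integrable (fun t => f a t * g b t) μ) :
    ∫ x : ι → α, (of fun i j => f j (x i)).det * (of fun i j => g j (x i)).det
        ∂(Measure.pi fun _ => μ) =
      (Fintype.card ι).factorial * (of fun a b => ∫ t, f a t * g b t ∂μ).det := by
  simp_rw [det_of_apply_apply_mul_det_of_apply_apply]
  rw [integral_finsetSum _ fun σ _ => integrable_finsetSum _ fun τ _ =>
    integrable_sign_mul_sign_mul_prod hfg σ τ, ← sum_perm_sum_perm_sign_mul_prod]
  refine sum_congr rfl fun σ _ => ?_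
  rw [integral_finsetSum _ fun τ _ => integrable_sign_mul_sign_mul_prod hfg σ τ]
  refine sum_congr rfl fun τ _ => ?_
  rw [integral_const_mul,
    integral_fintype_prod_eq_prod (fun i t => f (σ i) t * g (τ i) t)]
  rfl

end Andreief

/-- Monic Hermite polynomials for the weight `e^{-x²}`, normalised so that
`(p_n e^{-x²})' = -2 p_{n+1} e^{-x²}`. -/
noncomputable def monicHermite : ℕ → ℝ[X]
  | 0 => 1
  | n + 1 => X * monicHermite n - C 2⁻¹ * derivative (monicHermite n)

theorem monicHermite_monic_and_degree (n : ℕ) :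
    (monicHermite n).Monic ∧ (monicHermite n).degree = n := by
  induction n with
  | zero => simp [monicHermite]
  | succ n ih =>
    obtain ⟨hmonic, hdeg⟩ := ih
    have hXmul : (X * monicHermite n).degree = ↑(n + 1) := by
      rw [mul_comm, degree_mul_X, hdeg]; rfl
    have hlt : (C 2⁻¹ * derivative (monicHermite n)).degree < (X * monicHermite n).degree := by
      calc (C 2⁻¹ * derivative (monicHermite n)).degree
          = (derivative (monicHermite n)).degree := degree_C_mul (by norm_num)
        _ < (monicHermite n).degree := degree_derivative_lt hmonic.ne_zero
        _ ≤ (X * monicHermite n).degree := by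
          rw [hXmul, hdeg]; exact_mod_cast n.le_succ
    exact ⟨(monic_X.mul hmonic).sub_of_left hlt, by
      rw [monicHermite, degree_sub_eq_left_of_degree_lt hlt, hXmul]⟩

theorem monicHermite_monic (n : ℕ) : (monicHermite n).Monic :=
  (monicHermite_monic_and_degree n).1

theorem natDegree_monicHermite (n : ℕ) : (monicHermite n).natDegree = n :=
  natDegree_eq_of_degree_eq_some (monicHermite_monic_and_degree n).2

theorem integrable_eval_mul_exp_neg_sq (q : ℝ[X]) :
    Integrable fun x => q.eval x * exp (-x ^ 2) := by
  simp_rw [eval_eq_sum_range (p := q), sum_mul, mul_assoc]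
  refine integrable_finsetSum _ fun k _ => Integrable.const_mul ?_ _
  simpa [Real.rpow_natCast] using
    integrable_rpow_mul_exp_neg_mul_sq one_pos (s := k) (by linarith [k.cast_nonneg (α := ℝ)])

theorem hasDerivAt_monicHermite_mul_exp_neg_sq (n : ℕ) (x : ℝ) :
    HasDerivAt (fun t => (monicHermite n).eval t * exp (-t ^ 2))
      (-2 * ((monicHermite (n + 1)).eval x * exp (-x ^ 2))) x := by
  refine (((monicHermite n).hasDerivAt x).fun_mul (hasDerivAt_pow 2 x).fun_neg.exp).congr_deriv ?_
  rw [monicHermite]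
  simp only [eval_sub, eval_mul, eval_X, eval_C]
  ring

theorem integrable_eval_mul_eval_mul_exp_neg_sq (p q : ℝ[X]) :
    Integrable fun x => p.eval x * (q.eval x * exp (-x ^ 2)) := by
  simpa only [eval_mul, mul_assoc] using integrable_eval_mul_exp_neg_sq (p * q)

theorem integral_eval_mul_monicHermite_succ (q : ℝ[X]) (n : ℕ) :
    ∫ x, q.eval x * ((monicHermite (n + 1)).eval x * exp (-x ^ 2)) =
      2⁻¹ * ∫ x, (derivative q).eval x * ((monicHermite n).eval x * exp (-x ^ 2)) := by
  have hparts := integral_mul_deriv_eq_deriv_mul_of_integrable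
    (fun x _ => q.hasDerivAt x) (fun x _ => hasDerivAt_monicHermite_mul_exp_neg_sq n x)
    (by simpa only [Pi.mul_def, mul_left_comm _ (-2 : ℝ)] using
      (integrable_eval_mul_eval_mul_exp_neg_sq q (monicHermite (n + 1))).const_mul (-2))
    (integrable_eval_mul_eval_mul_exp_neg_sq _ _)
    (integrable_eval_mul_eval_mul_exp_neg_sq _ _)
  simp only [mul_left_comm _ (-2 : ℝ), integral_const_mul] at hparts
  linarith

theorem integral_eval_mul_monicHermite (q : ℝ[X]) (n : ℕ) :
    ∫ x, q.eval x * ((monicHermite n).eval x * exp (-x ^ 2)) =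
      (2 ^ n)⁻¹ * ∫ x, (derivative^[n] q).eval x * exp (-x ^ 2) := by
  induction n generalizing q with
  | zero => simp [monicHermite]
  | succ n ih =>
    rw [integral_eval_mul_monicHermite_succ, ih, Function.iterate_succ_apply, pow_succ]
    ring

theorem integral_monicHermite_mul_monicHermite (m n : ℕ) :
    ∫ x, (monicHermite m).eval x * ((monicHermite n).eval x * exp (-x ^ 2)) =
      if m = n then n.factorial * √π / 2 ^ n else 0 := by
  rcases lt_trichotomy m n with hmn | rfl | hnm
  · rw [integral_eval_mul_monicHermite, iterate_derivative_eq_zero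
      ((natDegree_monicHermite m).trans_lt hmn), if_neg hmn.ne]
    simp
  · have h := (monicHermite_monic m).iterate_derivative_natDegree
    rw [natDegree_monicHermite] at h
    have hgauss : ∫ x : ℝ, exp (-x ^ 2) = √π := by simpa using integral_gaussian 1
    rw [integral_eval_mul_monicHermite, h, if_pos rfl]
    simp only [eval_C]
    rw [integral_const_mul, hgauss]
    ring
  · simp_rw [mul_left_comm ((monicHermite m).eval _)]
    rw [integral_eval_mul_monicHermite, iterate_derivative_eq_zero
      ((natDegree_monicHermite n).trans_lt hnm), if_neg hnm.ne']
    simp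

theorem prod_range_factorial_mul_factorial (N : ℕ) :
    (∏ j ∈ range N, j.factorial) * N.factorial = ∏ j ∈ Icc 1 N, j.factorial := by
  induction N with
  | zero => rfl
  | succ N ih => rw [prod_range_succ, ih, prod_Icc_succ_top (by omega)]

theorem prod_range_sqrt_pi_div_two_pow (N : ℕ) :
    ∏ j ∈ range N, (√π / 2 ^ j) =
      (2 * π) ^ ((N : ℝ) / 2) * (2 : ℝ) ^ (-((N : ℝ) ^ 2) / 2) := by
  have hsum : ((∑ j ∈ range N, j : ℕ) : ℝ) = ((N : ℝ) ^ 2 - N) / 2 := by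
    induction N with
    | zero => simp
    | succ N ih => push_cast [sum_range_succ] at ih ⊢; rw [ih]; ring
  rw [prod_div_distrib, prod_const, card_range, prod_pow_eq_pow_sum,
    mul_rpow (by norm_num) pi_pos.le, sqrt_eq_rpow, ← rpow_natCast, ← rpow_mul pi_pos.le,
    ← rpow_natCast 2, hsum, mul_right_comm, ← rpow_add two_pos, div_eq_mul_inv,
    ← rpow_neg two_pos.le]
  ring_nf

noncomputable def gueWeight (N : ℕ) (y : Fin N → ℝ) : ℝ :=
  exp (-∑ j, y j ^ 2) *
    ∏ p ∈ univ.filter (fun p : Fin N × Fin N => p.1 < p.2), (y p.1 - y p.2) ^ 2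

theorem gueWeight_nonneg (N : ℕ) (y : Fin N → ℝ) : 0 ≤ gueWeight N y :=
  mul_nonneg (exp_pos _).le (prod_nonneg fun _ _ => sq_nonneg _)

theorem gueWeight_eq_det_mul_det (N : ℕ) (y : Fin N → ℝ) :
    gueWeight N y = (of fun i j : Fin N => (monicHermite j).eval (y i)).det *
      (of fun i j : Fin N => (monicHermite j).eval (y i) * exp (-y i ^ 2)).det := by
  have hvand := det_eval_matrixOfPolynomials_eq_det_vandermonde y (fun j => monicHermite j)
    (fun j => natDegree_monicHermite j) (fun j => monicHermite_monic j)
  have hcol := det_mul_column (fun i => exp (-y i ^ 2))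
    (of fun i j : Fin N => (monicHermite j).eval (y i))
  simp only [of_apply] at hcol
  simp_rw [mul_comm _ (exp _)]
  rw [hcol, ← hvand, ← exp_sum, sum_neg_distrib, gueWeight, ← det_vandermonde_sq]
  ring

theorem integrable_gueWeight (N : ℕ) : Integrable (gueWeight N) := by
  simp_rw [funext (gueWeight_eq_det_mul_det N), volume_pi]
  exact integrable_det_mul_det fun a b => integrable_eval_mul_eval_mul_exp_neg_sq _ _

theorem integral_gueWeight (N : ℕ) :
    ∫ y, gueWeight N y =
      (2 * π) ^ ((N : ℝ) / 2) * (2 : ℝ) ^ (-((N : ℝ) ^ 2) / 2) *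
        ∏ j ∈ Icc 1 N, (j.factorial : ℝ) := by
  have hgram : (of fun a b : Fin N => ∫ t, (monicHermite a).eval t *
      ((monicHermite b).eval t * exp (-t ^ 2))) =
      diagonal fun j : Fin N => (j : ℕ).factorial * √π / 2 ^ (j : ℕ) := by
    ext a b
    by_cases hab : a = b
    · simp [integral_monicHermite_mul_monicHermite, hab]
    · simp [integral_monicHermite_mul_monicHermite, hab, Fin.val_ne_iff.mpr hab]
  simp_rw [funext (gueWeight_eq_det_mul_det N)]
  rw [volume_pi, integral_det_mul_det fun a b => integrable_eval_mul_eval_mul_exp_neg_sq _ _,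
    hgram, det_diagonal, Fin.prod_univ_eq_prod_range (fun j => j.factorial * √π / 2 ^ j)]
  simp_rw [mul_div_assoc]
  rw [prod_mul_distrib, prod_range_sqrt_pi_div_two_pow, Fintype.card_fin,
    ← Nat.cast_prod (R := ℝ) Nat.factorial (Icc 1 N), ← prod_range_factorial_mul_factorial]
  push_cast
  ring

theorem gue_integral_monotone_and_bounded_general (N : ℕ) :
    MonotoneOn (GUEIntegral N) (Set.Ioi 0) ∧
    (∀ u > (0 : ℝ), GUEIntegral N u ≤
      (2 * π) ^ ((N : ℝ) / 2) * (2 : ℝ) ^ (-((N : ℝ) ^ 2) / 2) *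
        ∏ j ∈ Finset.Icc 1 N, (Nat.factorial j : ℝ)) ∧
    (∫ y : Fin N → ℝ,
        Real.exp (-∑ j, y j ^ 2) *
          ∏ p ∈ Finset.univ.filter (fun p : Fin N × Fin N => p.1 < p.2), (y p.1 - y p.2) ^ 2) =
      (2 * π) ^ ((N : ℝ) / 2) * (2 : ℝ) ^ (-((N : ℝ) ^ 2) / 2) *
        ∏ j ∈ Finset.Icc 1 N, (Nat.factorial j : ℝ) := by
  have hnonneg : 0 ≤ᵐ[volume] gueWeight N := ae_of_all _ (gueWeight_nonneg N)
  refine ⟨fun u _ v _ huv => ?_, fun u _ => ?_, integral_gueWeight N⟩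
  · refine setIntegral_mono_set (integrable_gueWeight N).integrableOn
      (ae_restrict_of_ae hnonneg) ?_
    exact (Set.pi_mono fun _ _ => Set.Ioo_subset_Ioo (neg_le_neg huv) huv).eventuallyLE
  · rw [← integral_gueWeight N]
    exact setIntegral_le_integral (integrable_gueWeight N) hnonneg

theorem gue_integral_monotone_and_bounded (N : ℕ) (hN : 1 ≤ N) :
    MonotoneOn (GUEIntegral N) (Set.Ioi 0) ∧
    (∀ u > (0 : ℝ), GUEIntegral N u ≤
      (2 * π) ^ ((N : ℝ) / 2) * (2 : ℝ) ^ (-((N : ℝ) ^ 2) / 2) *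
        ∏ j ∈ Finset.Icc 1 N, (Nat.factorial j : ℝ)) ∧
    (∫ y : Fin N → ℝ,
        Real.exp (-∑ j, y j ^ 2) *
          ∏ p ∈ Finset.univ.filter (fun p : Fin N × Fin N => p.1 < p.2), (y p.1 - y p.2) ^ 2) =
      (2 * π) ^ ((N : ℝ) / 2) * (2 : ℝ) ^ (-((N : ℝ) ^ 2) / 2) *
        ∏ j ∈ Finset.Icc 1 N, (Nat.factorial j : ℝ) :=
  gue_integral_monotone_and_bounded_general N
end

section
/- Let γ > 0, N ≥ 1, and z_u(γ) = (1/𝒩_C) ∫_{(-π,π]^N} exp(-2γ Σⱼ (1 - cos λⱼ)) Π_{j<k}|e^{iλⱼ} - e^{iλ_k}|² d^N λ, with 𝒩_C = (2π)^N N!. Then z_u(γ) ≤ γ^{-N²/2} (π/2)^{N²} 𝒩_G / 𝒩_C, where 𝒩_G = (2π)^{N/2} 2^{-N²/2} Π_{j=1}^{N} j! is the GUE normalization constant. -/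
/-!
On the box `(-π, π]^N` both factors of the integrand are dominated by Gaussian quantities:
Jordan's inequality `1 - cos x ≥ 2 x² / π²` bounds the weight by `∏ⱼ exp (-(4γ/π²) λⱼ²)`, and a
chord is shorter than its arc, `|e^{ia} - e^{ib}| ≤ |a - b|`, so the squared Vandermonde of the
`e^{iλⱼ}` is at most the squared Vandermonde of the `λⱼ`. Extending to `ℝ^N` and rescaling leaves
Mehta's integral `∫ Δ(y)² ∏ⱼ e^{-yⱼ²/2} dy = (2π)^{N/2} ∏_{j=1}^N j!`. It follows from Andréief's
identity, since the Vandermonde determinant is also the determinant of the Hermite polynomials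
evaluated at the `yⱼ`, and these are orthogonal for the Gaussian weight.
-/

open Real MeasureTheory Finset

namespace Polynomial
open scoped Nat

variable {R : Type*}

theorem iterate_derivative_natDegree [Semiring R] (p : R[X]) :
    derivative^[p.natDegree] p = C (p.natDegree ! • p.leadingCoeff) := by
  rw [eq_C_of_natDegree_le_zero ((natDegree_iterate_derivative p _).trans (by simp)),
    coeff_iterate_derivative, zero_add, Nat.descFactorial_self, leadingCoeff]

variable [CommSemiring R] [Algebra R ℝ]

theorem integrable_aeval_mul_gaussian (p : R[X]) :
    Integrable fun x : ℝ => aeval x p * exp (-(x ^ 2 / 2)) := by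
  have hpow (i : ℕ) : Integrable fun x : ℝ => x ^ i * exp (-(x ^ 2 / 2)) := by
    have := integrable_rpow_mul_exp_neg_mul_sq (b := 1 / 2) (by norm_num) (s := i)
      (by linarith [(i.cast_nonneg : (0 : ℝ) ≤ i)])
    simpa [Real.rpow_natCast, div_eq_inv_mul] using this
  simp_rw [aeval_eq_sum_range, Finset.sum_mul]
  refine integrable_finsetSum _ fun i _ => ?_
  simpa [Algebra.smul_def, mul_assoc] using (hpow i).const_mul (algebraMap R ℝ (p.coeff i))

theorem integrable_aeval_mul_hermite_mul_gaussian (p : R[X]) (n : ℕ) :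
    Integrable fun x : ℝ => aeval x p * (aeval x (hermite n) * exp (-(x ^ 2 / 2))) := by
  convert integrable_aeval_mul_gaussian
    (p.map (algebraMap R ℝ) * (hermite n).map (algebraMap ℤ ℝ)) using 2 with x
  rw [map_mul, aeval_map_algebraMap, aeval_map_algebraMap, mul_assoc]

theorem hasDerivAt_hermite_mul_gaussian (n : ℕ) (x : ℝ) :
    HasDerivAt (fun y => aeval y (hermite n) * exp (-(y ^ 2 / 2)))
      (-(aeval x (hermite (n + 1)) * exp (-(x ^ 2 / 2)))) x := by
  have hg : HasDerivAt (fun y : ℝ => exp (-(y ^ 2 / 2))) (-x * exp (-(x ^ 2 / 2))) x := by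
    simpa [mul_comm] using ((hasDerivAt_pow 2 x).div_const 2).neg.exp
  refine ((hermite n).hasDerivAt_aeval x |>.mul hg).congr_deriv ?_
  rw [hermite_succ, map_sub, map_mul, aeval_X]
  ring

theorem integral_aeval_mul_hermite_succ_mul_gaussian (p : R[X]) (n : ℕ) :
    ∫ x, aeval x p * (aeval x (hermite (n + 1)) * exp (-(x ^ 2 / 2))) =
      ∫ x, aeval x (derivative p) * (aeval x (hermite n) * exp (-(x ^ 2 / 2))) := by
  have := integral_mul_deriv_eq_deriv_mul_of_integrable
    (fun x _ => p.hasDerivAt_aeval x) (fun x _ => hasDerivAt_hermite_mul_gaussian n x)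
    (by simpa [Pi.mul_def] using (integrable_aeval_mul_hermite_mul_gaussian p (n + 1)).neg)
    (integrable_aeval_mul_hermite_mul_gaussian (derivative p) n)
    (integrable_aeval_mul_hermite_mul_gaussian p n)
  simpa [integral_neg] using this

theorem integral_aeval_mul_hermite_mul_gaussian (p : R[X]) (n : ℕ) :
    ∫ x, aeval x p * (aeval x (hermite n) * exp (-(x ^ 2 / 2))) =
      ∫ x, aeval x (derivative^[n] p) * exp (-(x ^ 2 / 2)) := by
  induction n generalizing p with
  | zero => simp
  | succ n ih =>
    rw [integral_aeval_mul_hermite_succ_mul_gaussian, ih, Function.iterate_succ_apply]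

theorem integral_hermite_mul_hermite_mul_gaussian (m n : ℕ) :
    ∫ x, aeval x (hermite m) * (aeval x (hermite n) * exp (-(x ^ 2 / 2))) =
      if m = n then n ! * √(2 * π) else 0 := by
  wlog hmn : m ≤ n generalizing m n
  · convert this n m (le_of_not_ge hmn) using 1
    · simp_rw [mul_left_comm (aeval _ (hermite m))]
    · by_cases h : m = n <;> simp [h, Ne.symm]
  rw [integral_aeval_mul_hermite_mul_gaussian]
  rcases hmn.lt_or_eq with hlt | rfl
  · simp [iterate_derivative_eq_zero (natDegree_hermite (n := m) ▸ hlt), hlt.ne]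
  · have hg : ∫ x : ℝ, exp (-(x ^ 2 / 2)) = √(2 * π) := by
      simpa [div_eq_inv_mul] using integral_gaussian (1 / 2)
    have hd := iterate_derivative_natDegree (hermite m)
    rw [natDegree_hermite, leadingCoeff_hermite, nsmul_one] at hd
    simp [hd, integral_const_mul, hg]

end Polynomial

section Andreief
open Matrix Equiv
open scoped Nat

variable {ι α : Type*} [Fintype ι] [DecidableEq ι]

theorem Matrix.det_of_eval_eq_sum (f : ι → α → ℝ) (x : ι → α) :
    (of fun i j => f j (x i)).det = ∑ σ : Perm ι, (Perm.sign σ : ℝ) * ∏ i, f (σ i) (x i) := by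
  rw [← det_transpose, det_apply']
  rfl

theorem Matrix.det_of_eval_mul_det_of_eval (f g : ι → α → ℝ) (x : ι → α) :
    (of fun i j => f j (x i)).det * (of fun i j => g j (x i)).det =
      ∑ σ : Perm ι, ∑ τ : Perm ι,
        (Perm.sign σ : ℝ) * Perm.sign τ * ∏ i, f (σ i) (x i) * g (τ i) (x i) := by
  simp_rw [det_of_eval_eq_sum, sum_mul_sum, prod_mul_distrib]
  refine sum_congr rfl fun σ _ => sum_congr rfl fun τ _ => by ring

theorem Matrix.sum_perm_sign_mul_prod_comp (G : Matrix ι ι ℝ) (σ : Perm ι) :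
    ∑ τ : Perm ι, (Perm.sign τ : ℝ) * ∏ i, G (σ i) (τ i) = Perm.sign σ * G.det := by
  rw [← det_permute, ← det_transpose, det_apply']
  rfl

variable [MeasurableSpace α] {μ : Measure α} [SigmaFinite μ] {f g : ι → α → ℝ}

theorem integrable_det_of_eval_mul_det_of_eval
    (hfg : ∀ i j, Integrable (fun x => f i x * g j x) μ) :
    Integrable (fun x : ι → α => (of fun i j => f j (x i)).det * (of fun i j => g j (x i)).det)
      (Measure.pi fun _ => μ) := by
  simp_rw [det_of_eval_mul_det_of_eval]
  exact integrable_finsetSum _ fun σ _ => integrable_finsetSum _ fun τ _ =>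
    (Integrable.fintype_prod fun i => hfg (σ i) (τ i)).const_mul _

theorem integral_det_of_eval_mul_det_of_eval (hfg : ∀ i j, Integrable (fun x => f i x * g j x) μ) :
    ∫ x : ι → α, (of fun i j => f j (x i)).det * (of fun i j => g j (x i)).det
        ∂(Measure.pi fun _ => μ) =
      (Fintype.card ι)! * (of fun i j => ∫ x, f i x * g j x ∂μ).det := by
  have hint (σ τ : Perm ι) : Integrable (fun x : ι → α => ∏ i, f (σ i) (x i) * g (τ i) (x i))
      (Measure.pi fun _ => μ) := Integrable.fintype_prod fun i => hfg (σ i) (τ i)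
  simp_rw [det_of_eval_mul_det_of_eval]
  calc _ = ∑ σ : Perm ι,
        (Perm.sign σ : ℝ) * (Perm.sign σ * (of fun i j => ∫ x, f i x * g j x ∂μ).det) := by
        rw [integral_finsetSum _ fun σ _ =>
          integrable_finsetSum _ fun τ _ => (hint σ τ).const_mul _]
        refine sum_congr rfl fun σ _ => ?_
        rw [integral_finsetSum _ fun τ _ => (hint σ τ).const_mul _,
          ← sum_perm_sign_mul_prod_comp, mul_sum]
        refine sum_congr rfl fun τ _ => ?_
        rw [integral_const_mul,
          integral_fintype_prod_eq_prod (f := fun i x => f (σ i) x * g (τ i) x), mul_assoc]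
        rfl
    _ = _ := by
        simp [← mul_assoc, ← Int.cast_mul, ← Units.val_mul, Fintype.card_perm]

end Andreief

namespace Matrix
open Polynomial
open scoped Nat

theorem prod_filter_lt_sq_sub_eq_det_vandermonde_sq {R : Type*} [CommRing R] {n : ℕ}
    (v : Fin n → R) :
    ∏ p ∈ univ.filter (fun p : Fin n × Fin n => p.1 < p.2), (v p.1 - v p.2) ^ 2 =
      (vandermonde v).det ^ 2 := by
  rw [det_vandermonde, prod_filter, Fintype.prod_prod_type, ← prod_pow]
  refine prod_congr rfl fun i _ => ?_
  rw [← prod_pow, ← filter_lt_eq_Ioi, prod_filter]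
  exact prod_congr rfl fun j _ => by split_ifs <;> ring

theorem det_vandermonde_smul {R : Type*} [CommRing R] {n : ℕ} (s : R) (v : Fin n → R) :
    (vandermonde (s • v)).det = s ^ (∑ i ∈ range n, i) * (vandermonde v).det := by
  rw [← prod_pow_eq_pow_sum, ← Fin.prod_univ_eq_prod_range (fun i => s ^ i), ← det_mul_row]
  congr 1
  ext i j
  simp [mul_pow]

theorem det_vandermonde_eq_det_hermite {n : ℕ} (v : Fin n → ℝ) :
    (vandermonde v).det = (of fun i j : Fin n => aeval (v i) (hermite j)).det := by
  rw [det_eval_matrixOfPolynomials_eq_det_vandermonde v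
    (fun j => (hermite j).map (algebraMap ℤ ℝ))
    (fun j => by rw [(hermite_monic _).natDegree_map, natDegree_hermite])
    (fun j => (hermite_monic _).map _)]
  simp [aeval_def, eval₂_eq_eval_map]

end Matrix

section Mehta
open Matrix Polynomial
open scoped Nat

theorem det_vandermonde_sq_mul_gaussian {n : ℕ} (x : Fin n → ℝ) :
    (vandermonde x).det ^ 2 * ∏ i, exp (-(x i ^ 2 / 2)) =
      (of fun i j : Fin n => aeval (x i) (hermite j)).det *
        (of fun i j : Fin n => aeval (x i) (hermite j) * exp (-(x i ^ 2 / 2))).det := by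
  rw [det_vandermonde_eq_det_hermite, sq, mul_assoc, mul_comm _ (∏ i, _), ← det_mul_column]
  congr 2
  ext i j
  simp [mul_comm]

theorem integrable_det_vandermonde_sq_mul_gaussian (n : ℕ) :
    Integrable fun x : Fin n → ℝ => (vandermonde x).det ^ 2 * ∏ i, exp (-(x i ^ 2 / 2)) := by
  simp_rw [det_vandermonde_sq_mul_gaussian]
  exact integrable_det_of_eval_mul_det_of_eval fun i j =>
    integrable_aeval_mul_hermite_mul_gaussian _ _

theorem integral_det_vandermonde_sq_mul_gaussian (n : ℕ) :
    ∫ x : Fin n → ℝ, (vandermonde x).det ^ 2 * ∏ i, exp (-(x i ^ 2 / 2)) =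
      √(2 * π) ^ n * sf n := by
  simp_rw [det_vandermonde_sq_mul_gaussian]
  rw [volume_pi, integral_det_of_eval_mul_det_of_eval
    (f := fun (j : Fin n) x => aeval x (hermite j)) fun i j =>
      integrable_aeval_mul_hermite_mul_gaussian _ _]
  simp_rw [integral_hermite_mul_hermite_mul_gaussian, Fin.val_inj, Fintype.card_fin]
  have hdiag : (of fun i j : Fin n => if i = j then ((j : ℕ)! : ℝ) * √(2 * π) else 0) =
      diagonal fun i : Fin n => ((i : ℕ)! : ℝ) * √(2 * π) := by
    ext i j
    by_cases h : i = j <;> simp [h]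
  rw [hdiag, det_diagonal, prod_mul_distrib, prod_const, card_univ, Fintype.card_fin,
    Fin.prod_univ_eq_prod_range (fun i => (i ! : ℝ)), ← Nat.prod_range_succ_factorial,
    prod_range_succ]
  push_cast
  ring

theorem two_mul_sum_range_id_add_self (n : ℕ) : 2 * ∑ i ∈ range n, i + n = n ^ 2 := by
  induction n with
  | zero => rfl
  | succ n ih => rw [sum_range_succ]; linarith

theorem det_vandermonde_sq_mul_exp_neg_mul_sq_eq_smul {b : ℝ} (hb : 0 < b) {n : ℕ} (x : Fin n → ℝ) :
    (vandermonde x).det ^ 2 * ∏ i, exp (-b * x i ^ 2) =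
      ((√(2 * b) ^ ∑ i ∈ range n, i) ^ 2)⁻¹ *
        ((vandermonde (√(2 * b) • x)).det ^ 2 * ∏ i, exp (-((√(2 * b) • x) i ^ 2 / 2))) := by
  have hs : √(2 * b) ≠ 0 := (sqrt_pos.2 (by positivity)).ne'
  simp only [det_vandermonde_smul, Pi.smul_apply, smul_eq_mul, mul_pow,
    sq_sqrt (by positivity : (0 : ℝ) ≤ 2 * b)]
  field_simp

theorem integrable_det_vandermonde_sq_mul_exp_neg_mul_sq {b : ℝ} (hb : 0 < b) (n : ℕ) :
    Integrable fun x : Fin n → ℝ => (vandermonde x).det ^ 2 * ∏ i, exp (-b * x i ^ 2) := by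
  simp_rw [det_vandermonde_sq_mul_exp_neg_mul_sq_eq_smul hb]
  exact ((integrable_comp_smul_iff volume _ (sqrt_pos.2 (by positivity)).ne').2
    (integrable_det_vandermonde_sq_mul_gaussian n)).const_mul _

theorem integral_det_vandermonde_sq_mul_exp_neg_mul_sq {b : ℝ} (hb : 0 < b) (n : ℕ) :
    ∫ x : Fin n → ℝ, (vandermonde x).det ^ 2 * ∏ i, exp (-b * x i ^ 2) =
      (2 * b) ^ (-(n : ℝ) ^ 2 / 2) * (√(2 * π) ^ n * sf n) := by
  simp_rw [det_vandermonde_sq_mul_exp_neg_mul_sq_eq_smul hb]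
  rw [integral_const_mul, Measure.integral_comp_smul volume
    (fun x : Fin n → ℝ => (vandermonde x).det ^ 2 * ∏ i, exp (-(x i ^ 2 / 2))),
    integral_det_vandermonde_sq_mul_gaussian, Module.finrank_fin_fun, smul_eq_mul,
    abs_of_nonneg (by positivity), ← mul_assoc, ← pow_mul, ← mul_inv, ← pow_add,
    mul_comm _ 2, two_mul_sum_range_id_add_self, sqrt_eq_rpow, ← rpow_natCast, ← rpow_mul
    (by positivity), ← rpow_neg (by positivity)]
  push_cast
  congr 2
  ring

end Mehta

theorem Complex.norm_exp_I_mul_sub_exp_I_mul_le (a b : ℝ) :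
    ‖Complex.exp (Complex.I * a) - Complex.exp (Complex.I * b)‖ ≤ |a - b| := by
  have : Complex.exp (Complex.I * a) - Complex.exp (Complex.I * b) =
      Complex.exp (Complex.I * b) * (Complex.exp (Complex.I * ↑(a - b)) - 1) := by
    rw [mul_sub, ← Complex.exp_add]
    push_cast
    ring_nf
  rw [this, norm_mul, Complex.norm_exp_I_mul_ofReal, one_mul]
  exact Real.norm_exp_I_mul_ofReal_sub_one_le

theorem prod_norm_exp_I_mul_sub_sq_le {ι : Type*} (s : Finset (ι × ι)) (x : ι → ℝ) :
    ∏ p ∈ s, ‖Complex.exp (Complex.I * x p.1) - Complex.exp (Complex.I * x p.2)‖ ^ 2 ≤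
      ∏ p ∈ s, (x p.1 - x p.2) ^ 2 := by
  refine prod_le_prod (fun p _ => by positivity) fun p _ => ?_
  rw [← sq_abs (x p.1 - x p.2)]
  gcongr
  exact Complex.norm_exp_I_mul_sub_exp_I_mul_le _ _

theorem exp_neg_mul_sum_one_sub_cos_le {ι : Type*} [Fintype ι] {c : ℝ} (hc : 0 ≤ c) {x : ι → ℝ}
    (hx : ∀ i, |x i| ≤ π) :
    exp (-2 * c * ∑ i, (1 - cos (x i))) ≤ ∏ i, exp (-(4 * c / π ^ 2) * x i ^ 2) := by
  rw [← exp_sum, exp_le_exp, mul_sum]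
  refine sum_le_sum fun i _ => ?_
  have := cos_le_one_sub_mul_cos_sq (hx i)
  have : 4 * c / π ^ 2 * x i ^ 2 = 2 * c * (2 / π ^ 2 * x i ^ 2) := by ring
  nlinarith

open Matrix in
theorem setIntegral_circular_le_integral_gaussian {N : ℕ} {γ : ℝ} (hγ : 0 < γ) :
    ∫ lam in Set.univ.pi (fun _ : Fin N => Set.Ioc (-π) π),
        exp (-2 * γ * ∑ j, (1 - cos (lam j))) *
          ∏ p ∈ univ.filter (fun p : Fin N × Fin N => p.1 < p.2),
            ‖Complex.exp (Complex.I * lam p.1) - Complex.exp (Complex.I * lam p.2)‖ ^ 2 ≤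
      ∫ x : Fin N → ℝ, (vandermonde x).det ^ 2 * ∏ i, exp (-(4 * γ / π ^ 2) * x i ^ 2) := by
  have hb : 0 < 4 * γ / π ^ 2 := by positivity
  have hint := integrable_det_vandermonde_sq_mul_exp_neg_mul_sq hb N
  refine (setIntegral_mono_on ?_ hint.integrableOn
    (MeasurableSet.univ_pi fun _ => measurableSet_Ioc) fun lam hmem => ?_).trans
    (setIntegral_le_integral hint (.of_forall fun x => by positivity))
  · refine (Continuous.continuousOn (by fun_prop)).integrableOn_compact
      (isCompact_univ_pi fun _ => isCompact_Icc (a := -π) (b := π)) |>.mono_set ?_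
    exact Set.pi_mono fun _ _ => Set.Ioc_subset_Icc_self
  · have hlam (i : Fin N) : |lam i| ≤ π := abs_le.2 ⟨(hmem i trivial).1.le, (hmem i trivial).2⟩
    rw [← prod_filter_lt_sq_sub_eq_det_vandermonde_sq, mul_comm]
    exact mul_le_mul (prod_norm_exp_I_mul_sub_sq_le _ lam)
      (exp_neg_mul_sum_one_sub_cos_le hγ.le hlam) (by positivity) (by positivity)

theorem zu_upper_bound_general (N : ℕ) (γ : ℝ) (hγ : 0 < γ) :
    (1 / ((2 * π) ^ N * (Nat.factorial N : ℝ))) *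
      (∫ lam in Set.univ.pi (fun _ : Fin N => Set.Ioc (-π) π),
        Real.exp (-2 * γ * ∑ j, (1 - Real.cos (lam j))) *
          ∏ p ∈ Finset.univ.filter (fun p : Fin N × Fin N => p.1 < p.2),
            ‖Complex.exp (Complex.I * lam p.1) -
              Complex.exp (Complex.I * lam p.2)‖ ^ 2) ≤
    γ ^ (-((N : ℝ) ^ 2) / 2) * (π / 2) ^ (N ^ 2) *
      ((2 * π) ^ ((N : ℝ) / 2) * (2 : ℝ) ^ (-((N : ℝ) ^ 2) / 2) *
        ∏ j ∈ Finset.Icc 1 N, (Nat.factorial j : ℝ)) /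
      ((2 * π) ^ N * (Nat.factorial N : ℝ)) := by
  have hconst : (2 * (4 * γ / π ^ 2)) ^ (-(N : ℝ) ^ 2 / 2) =
      γ ^ (-((N : ℝ) ^ 2) / 2) * (π / 2) ^ (N ^ 2) * (2 : ℝ) ^ (-((N : ℝ) ^ 2) / 2) := by
    rw [show 2 * (4 * γ / π ^ 2) = γ * 2 * ((π / 2) ^ 2)⁻¹ by field_simp; ring,
      mul_rpow (by positivity) (by positivity), mul_rpow (by positivity) (by positivity),
      inv_rpow (by positivity), ← rpow_natCast (π / 2) 2, ← rpow_mul (by positivity),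
      ← rpow_neg (by positivity), ← rpow_natCast (π / 2) (N ^ 2)]
    push_cast
    ring_nf
  have hsqrt : (2 * π) ^ ((N : ℝ) / 2) = √(2 * π) ^ N := by
    rw [sqrt_eq_rpow, ← rpow_natCast, ← rpow_mul (by positivity)]
    ring_nf
  rw [one_div_mul_eq_div]
  gcongr
  calc _ ≤ _ := setIntegral_circular_le_integral_gaussian hγ
    _ = _ := by
      rw [integral_det_vandermonde_sq_mul_exp_neg_mul_sq (by positivity), hconst, hsqrt,
        ← Nat.cast_prod, Nat.prod_Icc_factorial]
      ring

theorem zu_upper_bound (N : ℕ) (hN : 1 ≤ N) (γ : ℝ) (hγ : 0 < γ) :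
    (1 / ((2 * π) ^ N * (Nat.factorial N : ℝ))) *
      (∫ lam in Set.univ.pi (fun _ : Fin N => Set.Ioc (-π) π),
        Real.exp (-2 * γ * ∑ j, (1 - Real.cos (lam j))) *
          ∏ p ∈ Finset.univ.filter (fun p : Fin N × Fin N => p.1 < p.2),
            ‖Complex.exp (Complex.I * lam p.1) -
              Complex.exp (Complex.I * lam p.2)‖ ^ 2) ≤
    γ ^ (-((N : ℝ) ^ 2) / 2) * (π / 2) ^ (N ^ 2) *
      ((2 * π) ^ ((N : ℝ) / 2) * (2 : ℝ) ^ (-((N : ℝ) ^ 2) / 2) *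
        ∏ j ∈ Finset.Icc 1 N, (Nat.factorial j : ℝ)) /
      ((2 * π) ^ N * (Nat.factorial N : ℝ)) :=
  zu_upper_bound_general N γ hγ
end

section
/- Let γ > 0, N ≥ 1, C² = 4N, d ∈ {2,3,4}, and z_ℓ(γ) = (1/𝒩_C) ∫_{(-π,π]^N} exp(-2C²(d-1)γ Σⱼ λⱼ²) Π_{j<k}|e^{iλⱼ} - e^{iλ_k}|² d^N λ, with 𝒩_C = (2π)^N N!. Then for γ ≥ 1/g₀² (with g₀ > 0 fixed), z_ℓ(γ) ≥ γ^{-N²/2} 𝒩_C^{-1} (4/π²)^{N(N-1)/2} [2(d-1)C²]^{-N²/2} I₂(π√(2(d-1)C²)/(2g₀)) > 0, where I₂(u) = ∫_{(-u,u)^N} e^{-Σ yⱼ²} Π_{j<k}(yⱼ-y_k)² d^N y. -/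
/-! On the half-cube `(-π/2, π/2]^N` Jordan's inequality `|sin t| ≥ 2|t|/π` gives
`‖e^{ia} - e^{ib}‖² ≥ (4/π²)(a - b)²`, so the circular Vandermonde factor dominates
`(4/π²)^{N(N-1)/2}` times the real one. The substitution `y = √(γA) λ`, with `A = 2(d-1)C²`,
turns the resulting Gaussian integral into `(γA)^{-N²/2} I₂(√(γA) π/2)`: the squared
Vandermonde is homogeneous of degree `N(N-1)` and the Jacobian contributes `N` more.
Since `γ ≥ 1/g₀²`, monotonicity of `I₂` bounds this below by `I₂(π√A/(2g₀))`, which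
is positive because its continuous integrand vanishes only on the diagonals. -/

open Real MeasureTheory Finset

lemma Nat.two_mul_choose_two_add (n : ℕ) : 2 * n.choose 2 + n = n ^ 2 := by
  induction n with
  | zero => rfl
  | succ n ih => rw [Nat.choose_succ_succ', Nat.choose_one_right]; linarith

lemma Complex.norm_exp_I_mul_ofReal_sub (a b : ℝ) :
    ‖Complex.exp (Complex.I * a) - Complex.exp (Complex.I * b)‖ =
      |2 * Real.sin ((a - b) / 2)| := by
  have h : Complex.exp (Complex.I * a) - Complex.exp (Complex.I * b)
      = Complex.exp (Complex.I * b) * (Complex.exp (Complex.I * ↑(a - b)) - 1) := by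
    rw [mul_sub, ← Complex.exp_add, mul_one]; push_cast; ring_nf
  rw [h, norm_mul, Complex.norm_exp_I_mul_ofReal, one_mul, Complex.norm_exp_I_mul_ofReal_sub_one,
    Real.norm_eq_abs]

lemma mul_abs_sub_le_norm_exp_I_mul_sub {a b : ℝ} (ha : |a| ≤ π / 2) (hb : |b| ≤ π / 2) :
    2 / π * |a - b| ≤ ‖Complex.exp (Complex.I * a) - Complex.exp (Complex.I * b)‖ := by
  have hab : |(a - b) / 2| ≤ π / 2 := by
    rw [abs_div, abs_two]; linarith [abs_sub a b]
  rw [Complex.norm_exp_I_mul_ofReal_sub, abs_mul, abs_two]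
  have := Real.mul_abs_le_abs_sin hab
  rw [abs_div, abs_two] at this
  linarith

lemma Continuous.integrableOn_univ_pi_Ioc {ι E : Type*} [Fintype ι] [NormedAddCommGroup E]
    {f : (ι → ℝ) → E} (hf : Continuous f) (a b : ι → ℝ) :
    IntegrableOn f (Set.univ.pi fun i => Set.Ioc (a i) (b i)) :=
  (hf.continuousOn.integrableOn_compact (isCompact_univ_pi fun _ => isCompact_Icc)).mono_set
    (Set.pi_mono fun _ _ => Set.Ioc_subset_Icc_self)

section Vandermonde

variable {ι : Type*} [Fintype ι] [LinearOrder ι]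

def vandermondeSq (y : ι → ℝ) : ℝ :=
  ∏ p ∈ univ.filter (fun p : ι × ι => p.1 < p.2), (y p.1 - y p.2) ^ 2

lemma vandermondeSq_pos {y : ι → ℝ} (hy : Function.Injective y) : 0 < vandermondeSq y :=
  prod_pos fun _ hp => sq_pos_of_ne_zero (sub_ne_zero.2 (hy.ne (mem_filter.1 hp).2.ne))

@[fun_prop]
lemma continuous_vandermondeSq : Continuous (vandermondeSq : (ι → ℝ) → ℝ) := by
  unfold vandermondeSq; fun_prop

lemma vandermondeSq_smul (s : ℝ) (y : ι → ℝ) :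
    vandermondeSq (s • y) = s ^ (2 * (Fintype.card ι).choose 2) * vandermondeSq y := by
  rw [vandermondeSq, vandermondeSq, ← Fintype.card_product_filter_lt, pow_mul, ← prod_const,
    ← prod_mul_distrib]
  refine prod_congr rfl fun p _ => ?_
  simp only [Pi.smul_apply, smul_eq_mul]
  ring

lemma pow_mul_vandermondeSq_le_prod_norm_sq {x : ι → ℝ} (hx : ∀ i, |x i| ≤ π / 2) :
    (4 / π ^ 2) ^ (Fintype.card ι).choose 2 * vandermondeSq x ≤
      ∏ p ∈ univ.filter (fun p : ι × ι => p.1 < p.2),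
        ‖Complex.exp (Complex.I * x p.1) - Complex.exp (Complex.I * x p.2)‖ ^ 2 := by
  rw [vandermondeSq, ← Fintype.card_product_filter_lt, ← prod_const, ← prod_mul_distrib]
  refine prod_le_prod (fun _ _ => by positivity) fun p _ => ?_
  calc 4 / π ^ 2 * (x p.1 - x p.2) ^ 2 = (2 / π * |x p.1 - x p.2|) ^ 2 := by
        rw [mul_pow, sq_abs]; ring
    _ ≤ _ := by gcongr; exact mul_abs_sub_le_norm_exp_I_mul_sub (hx p.1) (hx p.2)

noncomputable def gueDensity (y : ι → ℝ) : ℝ := Real.exp (-∑ i, y i ^ 2) * vandermondeSq y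

lemma gueDensity_nonneg (y : ι → ℝ) : 0 ≤ gueDensity y :=
  mul_nonneg (Real.exp_nonneg _) (prod_nonneg fun _ _ => sq_nonneg _)

lemma continuous_gueDensity : Continuous (gueDensity : (ι → ℝ) → ℝ) := by
  unfold gueDensity; fun_prop

lemma gueDensity_smul (s : ℝ) (x : ι → ℝ) :
    gueDensity (s • x) =
      s ^ (2 * (Fintype.card ι).choose 2) *
        (Real.exp (-s ^ 2 * ∑ i, x i ^ 2) * vandermondeSq x) := by
  simp only [gueDensity, vandermondeSq_smul, Pi.smul_apply, smul_eq_mul, mul_pow, ← mul_sum,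
    neg_mul]
  ring

lemma setIntegral_gueDensity_pos {u : ℝ} (hu : 0 < u) :
    0 < ∫ y in Set.univ.pi (fun _ : ι => Set.Ioo (-u) u), gueDensity y := by
  have : Infinite (Set.Ioo (-u) u) := (Set.Ioo_infinite (by linarith)).to_subtype
  let e : ι ↪ Set.Ioo (-u) u :=
    (Fintype.equivFin ι).toEmbedding.trans (Fin.valEmbedding.trans (Infinite.natEmbedding _))
  have hbox : IsOpen (Set.univ.pi fun _ : ι => Set.Ioo (-u) u) :=
    isOpen_set_pi Set.finite_univ fun _ _ => isOpen_Ioo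
  rw [setIntegral_pos_iff_support_of_nonneg_ae (ae_of_all _ gueDensity_nonneg)
    ((continuous_gueDensity.integrableOn_univ_pi_Ioc _ _).mono_set
      (Set.pi_mono fun _ _ => Set.Ioo_subset_Ioc_self))]
  refine (continuous_gueDensity.isOpen_support.inter hbox).measure_pos volume
    ⟨fun i => e i, ?_, fun i _ => (e i).2⟩
  exact (mul_pos (Real.exp_pos _)
    (vandermondeSq_pos (Subtype.val_injective.comp e.injective))).ne'

lemma setIntegral_gueDensity_mono {u v : ℝ} (huv : u ≤ v) :
    ∫ y in Set.univ.pi (fun _ : ι => Set.Ioo (-u) u), gueDensity y ≤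
      ∫ y in Set.univ.pi (fun _ : ι => Set.Ioc (-v) v), gueDensity y :=
  setIntegral_mono_set (continuous_gueDensity.integrableOn_univ_pi_Ioc _ _)
    (ae_of_all _ gueDensity_nonneg)
    (Set.pi_mono fun _ _ => Set.Ioo_subset_Ioc_self.trans
      (Set.Ioc_subset_Ioc (neg_le_neg huv) huv)).eventuallyLE

open scoped Pointwise in
lemma setIntegral_exp_mul_vandermondeSq_eq {a : ℝ} (ha : 0 < a) (r : ℝ) :
    ∫ x in Set.univ.pi (fun _ : ι => Set.Ioc (-r) r),
        Real.exp (-a * ∑ i, x i ^ 2) * vandermondeSq x =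
      a ^ (-((Fintype.card ι : ℝ) ^ 2) / 2) *
        ∫ y in Set.univ.pi (fun _ : ι => Set.Ioc (-(√a * r)) (√a * r)), gueDensity y := by
  set n := Fintype.card ι
  have hs : 0 < √a := Real.sqrt_pos.2 ha
  have hbox : √a • Set.univ.pi (fun _ : ι => Set.Ioc (-r) r) =
      Set.univ.pi (fun _ : ι => Set.Ioc (-(√a * r)) (√a * r)) := by
    rw [Set.smul_set_univ_pi]
    congr 1
    ext1 i
    rw [Pi.smul_apply, LinearOrderedField.smul_Ioc hs, mul_neg]
  have hpow : √a ^ n * √a ^ (2 * n.choose 2) = a ^ ((n : ℝ) ^ 2 / 2) := by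
    rw [← pow_add, add_comm, Nat.two_mul_choose_two_add, Real.sqrt_eq_rpow, ← Real.rpow_natCast,
      ← Real.rpow_mul ha.le]
    push_cast
    ring_nf
  have hcov := Measure.setIntegral_comp_smul_of_pos volume gueDensity
    (Set.univ.pi fun _ : ι => Set.Ioc (-r) r) hs
  simp only [gueDensity_smul, Real.sq_sqrt ha.le, integral_const_mul,
    Module.finrank_fintype_fun_eq_card, smul_eq_mul, hbox] at hcov
  rw [← mul_inv_cancel_left₀ (pow_ne_zero n hs.ne') (∫ y in _, gueDensity y), ← hcov,
    ← mul_assoc, ← mul_assoc, mul_assoc (a ^ _), hpow, neg_div, ← Real.rpow_add ha,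
    neg_add_cancel, Real.rpow_zero, one_mul]

lemma pow_mul_setIntegral_le_setIntegral_circular (a : ℝ) :
    (4 / π ^ 2) ^ (Fintype.card ι).choose 2 *
        ∫ x in Set.univ.pi (fun _ : ι => Set.Ioc (-(π / 2)) (π / 2)),
          Real.exp (-a * ∑ i, x i ^ 2) * vandermondeSq x ≤
      ∫ x in Set.univ.pi (fun _ : ι => Set.Ioc (-π) π),
        Real.exp (-a * ∑ i, x i ^ 2) *
          ∏ p ∈ univ.filter (fun p : ι × ι => p.1 < p.2),
            ‖Complex.exp (Complex.I * x p.1) - Complex.exp (Complex.I * x p.2)‖ ^ 2 := by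
  set G : (ι → ℝ) → ℝ := fun x => Real.exp (-a * ∑ i, x i ^ 2) *
    ∏ p ∈ univ.filter (fun p : ι × ι => p.1 < p.2),
      ‖Complex.exp (Complex.I * x p.1) - Complex.exp (Complex.I * x p.2)‖ ^ 2
  have hG : Continuous G := by fun_prop
  rw [← integral_const_mul]
  calc _ ≤ ∫ x in Set.univ.pi (fun _ : ι => Set.Ioc (-(π / 2)) (π / 2)), G x := by
        refine setIntegral_mono_on ((by fun_prop : Continuous _).integrableOn_univ_pi_Ioc _ _)
          (hG.integrableOn_univ_pi_Ioc _ _) (MeasurableSet.univ_pi fun _ => measurableSet_Ioc)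
          fun x hx => ?_
        rw [mul_left_comm]
        refine mul_le_mul_of_nonneg_left (pow_mul_vandermondeSq_le_prod_norm_sq fun i => ?_)
          (Real.exp_nonneg _)
        exact abs_le.2 ⟨(hx i trivial).1.le, (hx i trivial).2⟩
    _ ≤ _ := setIntegral_mono_set (hG.integrableOn_univ_pi_Ioc _ _)
        (ae_of_all _ fun x => by positivity)
        (Set.pi_mono fun _ _ =>
          Set.Ioc_subset_Ioc (by linarith [pi_pos]) (by linarith [pi_pos])).eventuallyLE

lemma pow_mul_rpow_mul_setIntegral_gueDensity_le {a u : ℝ} (ha : 0 < a)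
    (hu : u ≤ √a * (π / 2)) :
    (4 / π ^ 2) ^ (Fintype.card ι).choose 2 * (a ^ (-((Fintype.card ι : ℝ) ^ 2) / 2) *
        ∫ y in Set.univ.pi (fun _ : ι => Set.Ioo (-u) u), gueDensity y) ≤
      ∫ x in Set.univ.pi (fun _ : ι => Set.Ioc (-π) π),
        Real.exp (-a * ∑ i, x i ^ 2) *
          ∏ p ∈ univ.filter (fun p : ι × ι => p.1 < p.2),
            ‖Complex.exp (Complex.I * x p.1) - Complex.exp (Complex.I * x p.2)‖ ^ 2 :=
  calc _ ≤ (4 / π ^ 2) ^ (Fintype.card ι).choose 2 * (a ^ (-((Fintype.card ι : ℝ) ^ 2) / 2) *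
        ∫ y in Set.univ.pi (fun _ : ι => Set.Ioc (-(√a * (π / 2))) (√a * (π / 2))),
          gueDensity y) := by
        gcongr _ * (_ * ?_)
        exact setIntegral_gueDensity_mono hu
    _ = (4 / π ^ 2) ^ (Fintype.card ι).choose 2 *
        ∫ x in Set.univ.pi (fun _ : ι => Set.Ioc (-(π / 2)) (π / 2)),
          Real.exp (-a * ∑ i, x i ^ 2) * vandermondeSq x := by
        rw [setIntegral_exp_mul_vandermondeSq_eq ha]
    _ ≤ _ := pow_mul_setIntegral_le_setIntegral_circular (ι := ι) a

end Vandermonde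

theorem zl_lower_bound (N : ℕ) (hN : 1 ≤ N) (d : ℕ) (hd : d ∈ ({2, 3, 4} : Set ℕ))
    (g₀ : ℝ) (hg₀ : 0 < g₀) (γ : ℝ) (hγ : 1 / g₀ ^ 2 ≤ γ) :
    (1 / ((2 * π) ^ N * (Nat.factorial N : ℝ))) *
      (∫ lam in Set.univ.pi (fun _ : Fin N => Set.Ioc (-π) π),
        Real.exp (-2 * (4 * N) * ((d : ℝ) - 1) * γ * ∑ j, lam j ^ 2) *
          ∏ p ∈ Finset.univ.filter (fun p : Fin N × Fin N => p.1 < p.2),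
            ‖Complex.exp (Complex.I * lam p.1) -
              Complex.exp (Complex.I * lam p.2)‖ ^ 2) ≥
      γ ^ (-((N : ℝ) ^ 2) / 2) * (1 / ((2 * π) ^ N * (Nat.factorial N : ℝ))) *
        (4 / π ^ 2) ^ (N * (N - 1) / 2) *
        (2 * ((d : ℝ) - 1) * (4 * N)) ^ (-((N : ℝ) ^ 2) / 2) *
        GUEIntegral N (π * Real.sqrt (2 * ((d : ℝ) - 1) * (4 * N)) / (2 * g₀)) ∧
    0 < γ ^ (-((N : ℝ) ^ 2) / 2) * (1 / ((2 * π) ^ N * (Nat.factorial N : ℝ))) *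
        (4 / π ^ 2) ^ (N * (N - 1) / 2) *
        (2 * ((d : ℝ) - 1) * (4 * N)) ^ (-((N : ℝ) ^ 2) / 2) *
        GUEIntegral N (π * Real.sqrt (2 * ((d : ℝ) - 1) * (4 * N)) / (2 * g₀)) := by
  set A : ℝ := 2 * ((d : ℝ) - 1) * (4 * N)
  have hA : 0 < A := by
    have hd1 : (1 : ℝ) < d := by rcases hd with rfl | rfl | rfl <;> norm_num
    have hN1 : (1 : ℝ) ≤ N := by exact_mod_cast hN
    exact mul_pos (mul_pos two_pos (sub_pos.2 hd1)) (by positivity)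
  have hγ0 : 0 < γ := (by positivity : (0 : ℝ) < 1 / g₀ ^ 2).trans_le hγ
  have hu : π * √A / (2 * g₀) ≤ √(γ * A) * (π / 2) := by
    have : √A / g₀ ≤ √(γ * A) := by
      rw [← Real.sqrt_sq hg₀.le, ← Real.sqrt_div' _ (sq_nonneg _), div_eq_mul_one_div,
        mul_comm]
      exact Real.sqrt_le_sqrt (mul_le_mul_of_nonneg_right hγ hA.le)
    calc π * √A / (2 * g₀) = √A / g₀ * (π / 2) := by ring
      _ ≤ _ := by gcongr
  have key := pow_mul_rpow_mul_setIntegral_gueDensity_le (ι := Fin N) (mul_pos hγ0 hA) hu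
  rw [Fintype.card_fin, Nat.choose_two_right] at key
  have hexp : ∀ x : Fin N → ℝ,
      -2 * (4 * N) * ((d : ℝ) - 1) * γ * ∑ j, x j ^ 2 = -(γ * A) * ∑ j, x j ^ 2 :=
    fun x => by ring
  simp only [hexp]
  refine ⟨?_, mul_pos (by positivity) (setIntegral_gueDensity_pos (by positivity))⟩
  calc _ = 1 / ((2 * π) ^ N * (Nat.factorial N : ℝ)) * ((4 / π ^ 2) ^ (N * (N - 1) / 2) *
        ((γ * A) ^ (-((N : ℝ) ^ 2) / 2) * GUEIntegral N (π * √A / (2 * g₀)))) := by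
        rw [Real.mul_rpow hγ0.le hA.le]; ring
    _ ≤ _ := mul_le_mul_of_nonneg_left key (by positivity)
end
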